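/- Assume M ≥ 1. The money-exchange chain is aperiodic: for every ξ ∈ S, the greatest common divisor of the set { t ≥ 1 : p_t(ξ, ξ) > 0 } equals 1. -/
import Mathlib


open scoped Classical
open Finset

section MoneyExchange

variable {V : Type*} [Fintype V] [DecidableEq V] {K : ℕ}

/-- Move one coin from `x` to `y`. -/
def tau (x y : V) (ξ : V → ℤ) : V → ℤ :=
  fun z => ξ z - (if z = x then 1 else 0) + (if z = y then 1 else 0)

/-- Total (nonpositive) debt of the customers of bank `i`:
`∑_{z ∈ Vᵢ} ξ(z) · 1{ξ(z) < 0}`. -/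
def bankDebt (bank : V → Fin K) (ξ : V → ℤ) (i : Fin K) : ℤ :=
  ∑ z ∈ univ.filter fun z => bank z = i, min (ξ z) 0

/-- Admissible configurations: total money `M` and each bank lends at most `Rᵢ`. -/
def admissible (bank : V → Fin K) (R : Fin K → ℕ) (M : ℕ) (ξ : V → ℤ) : Prop :=
  (∑ z, ξ z) = (M : ℤ) ∧ ∀ i, -(R i : ℤ) ≤ bankDebt bank ξ i

/-- The move from `x` is allowed in `ξ`: `x` has a coin or its bank is nonempty. -/
def allowed (bank : V → Fin K) (R : Fin K → ℕ) (ξ : V → ℤ) (x : V) : Prop :=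
  0 < ξ x ∨ -(R (bank x) : ℤ) < bankDebt bank ξ (bank x)

/-- One-step transition probability of the money-exchange chain: each ordered
adjacent pair `(x, y)` is chosen with probability `1/(2|E|)`, and a coin moves
from `x` to `y` whenever the move from `x` is allowed; otherwise nothing happens. -/
noncomputable def step (G : SimpleGraph V) (bank : V → Fin K) (R : Fin K → ℕ)
    (ξ ξ' : V → ℤ) : ℝ :=
  (((univ.filter fun pq : V × V =>
        G.Adj pq.1 pq.2 ∧ allowed bank R ξ pq.1 ∧ tau pq.1 pq.2 ξ = ξ').card : ℝ)
      + if ξ' = ξ then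
          ((univ.filter fun pq : V × V =>
            G.Adj pq.1 pq.2 ∧ ¬ allowed bank R ξ pq.1).card : ℝ)
        else 0)
    / ((univ.filter fun pq : V × V => G.Adj pq.1 pq.2).card : ℝ)

/-- `t`-step transition probability of the money-exchange chain. -/
noncomputable def stepT (G : SimpleGraph V) (bank : V → Fin K) (R : Fin K → ℕ) :
    ℕ → (V → ℤ) → (V → ℤ) → ℝ
  | 0, ξ, ξ' => if ξ = ξ' then 1 else 0
  | t + 1, ξ, ξ' =>
      ∑ η ∈ insert ξ ((univ.filter fun pq : V × V => G.Adj pq.1 pq.2).image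
          fun pq => tau pq.1 pq.2 ξ),
        step G bank R ξ η * stepT G bank R t η ξ'

end MoneyExchange

section AuxLemmas

variable {V : Type*} [Fintype V] [DecidableEq V] {K : ℕ}
variable (G : SimpleGraph V) (bank : V → Fin K) (R : Fin K → ℕ)

lemma tau_tau {x y : V} (ζ : V → ℤ) : tau y x (tau x y ζ) = ζ := by
  funext z; simp only [tau]; ring

lemma sum_tau (x y : V) (ζ : V → ℤ) : ∑ z, tau x y ζ z = ∑ z, ζ z := by
  simp only [tau, Finset.sum_add_distrib, Finset.sum_sub_distrib,
    Finset.sum_ite_eq' Finset.univ, Finset.mem_univ, if_true]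
  ring

lemma bankDebt_tau {x y : V} (hxy : x ≠ y) (ζ : V → ℤ) (j : Fin K) :
    bankDebt bank (tau x y ζ) j =
      bankDebt bank ζ j
        + (if bank x = j then min (ζ x - 1) 0 - min (ζ x) 0 else 0)
        + (if bank y = j then min (ζ y + 1) 0 - min (ζ y) 0 else 0) := by
  unfold bankDebt
  rw [show (∑ z ∈ univ.filter fun z => bank z = j, min (tau x y ζ z) 0)
      = ∑ z ∈ univ.filter fun z => bank z = j,
          (min (ζ z) 0 + (if z = x then min (ζ x - 1) 0 - min (ζ x) 0 else 0)
            + (if z = y then min (ζ y + 1) 0 - min (ζ y) 0 else 0)) from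
    Finset.sum_congr rfl fun z _ => by
      simp only [tau]
      rcases eq_or_ne z x with rfl | hx
      · simp only [if_pos rfl, if_neg hxy, if_true]
        have h : ζ z - 1 + 0 = ζ z - 1 := by ring
        rw [h]; ring
      · rcases eq_or_ne z y with rfl | hy
        · simp only [if_neg hx, if_pos rfl, if_true]
          have h : ζ z - 0 + 1 = ζ z + 1 := by ring
          rw [h]; ring
        · simp only [if_neg hx, if_neg hy]
          have h : ζ z - 0 + 0 = ζ z := by ring
          rw [h]; ring]
  rw [Finset.sum_add_distrib, Finset.sum_add_distrib,
    Finset.sum_ite_eq' _ x (fun _ => min (ζ x - 1) 0 - min (ζ x) 0),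
    Finset.sum_ite_eq' _ y (fun _ => min (ζ y + 1) 0 - min (ζ y) 0)]
  simp only [Finset.mem_filter, Finset.mem_univ, true_and]

lemma bankDebt_le (ζ : V → ℤ) (z : V) : bankDebt bank ζ (bank z) ≤ min (ζ z) 0 := by
  unfold bankDebt
  have hz : z ∈ univ.filter fun a => bank a = bank z := by simp
  rw [← Finset.add_sum_erase _ _ hz]
  have h : ∑ a ∈ (univ.filter fun a => bank a = bank z).erase z, min (ζ a) 0 ≤ 0 :=
    Finset.sum_nonpos fun a _ => min_le_right _ _
  linarith

lemma move_admissible {M : ℕ} {x y : V} (hxy : x ≠ y) {ζ : V → ℤ}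
    (hζ : admissible bank R M ζ) (hx : allowed bank R ζ x) :
    admissible bank R M (tau x y ζ) ∧ allowed bank R (tau x y ζ) y := by
  obtain ⟨hsum, hdebt⟩ := hζ
  constructor
  · refine ⟨by rw [sum_tau]; exact hsum, ?_⟩
    intro j
    rw [bankDebt_tau bank hxy]
    have h1 := hdebt j
    rcases hx with h2 | h2
    · split_ifs <;> omega
    · by_cases hbx : bank x = j
      · rw [hbx] at h2
        split_ifs <;> omega
      · split_ifs <;> omega
  · by_cases hy0 : 0 < ζ y + 1
    · left
      have : tau x y ζ y = ζ y + 1 := by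
        simp only [tau, if_neg (Ne.symm hxy), if_pos rfl, if_true]; ring
      rw [this]; exact hy0
    · right
      rw [bankDebt_tau bank hxy]
      have h1 := hdebt (bank y)
      have hyy : (if bank y = bank y then min (ζ y + 1) 0 - min (ζ y) 0 else 0)
          = min (ζ y + 1) 0 - min (ζ y) 0 := if_pos rfl
      rw [hyy]
      rcases hx with h2 | h2
      · split_ifs <;> omega
      · by_cases hbx : bank x = bank y
        · rw [hbx] at h2
          split_ifs <;> omega
        · split_ifs <;> omega

lemma step_nonneg (ζ ζ' : V → ℤ) : 0 ≤ step G bank R ζ ζ' := by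
  unfold step
  apply div_nonneg _ (Nat.cast_nonneg _)
  apply add_nonneg (Nat.cast_nonneg _)
  split_ifs <;> simp [Nat.cast_nonneg]

lemma denom_pos {x y : V} (hadj : G.Adj x y) :
    0 < ((univ.filter fun pq : V × V => G.Adj pq.1 pq.2).card : ℝ) := by
  have h : (x, y) ∈ univ.filter fun pq : V × V => G.Adj pq.1 pq.2 := by simp [hadj]
  exact_mod_cast Finset.card_pos.mpr ⟨_, h⟩

lemma step_pos_move {x y : V} (hadj : G.Adj x y) {ζ : V → ℤ}
    (hx : allowed bank R ζ x) : 0 < step G bank R ζ (tau x y ζ) := by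
  unfold step
  apply div_pos _ (denom_pos G hadj)
  have hmem : (x, y) ∈ univ.filter (fun pq : V × V =>
      G.Adj pq.1 pq.2 ∧ allowed bank R ζ pq.1 ∧ tau pq.1 pq.2 ζ = tau x y ζ) := by
    simp [hadj, hx]
  have h1 : (0 : ℝ) < ((univ.filter (fun pq : V × V =>
      G.Adj pq.1 pq.2 ∧ allowed bank R ζ pq.1 ∧ tau pq.1 pq.2 ζ = tau x y ζ)).card : ℝ) := by
    exact_mod_cast Finset.card_pos.mpr ⟨_, hmem⟩
  have h2 : (0:ℝ) ≤ if tau x y ζ = ζ then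
      ((univ.filter fun pq : V × V =>
        G.Adj pq.1 pq.2 ∧ ¬ allowed bank R ζ pq.1).card : ℝ) else 0 := by
    split_ifs <;> simp [Nat.cast_nonneg]
  linarith

lemma step_pos_lazy {x y : V} (hadj : G.Adj x y) {ζ : V → ℤ}
    (hx : ¬ allowed bank R ζ x) : 0 < step G bank R ζ ζ := by
  unfold step
  apply div_pos _ (denom_pos G hadj)
  rw [if_pos rfl]
  have hmem : (x, y) ∈ univ.filter (fun pq : V × V =>
      G.Adj pq.1 pq.2 ∧ ¬ allowed bank R ζ pq.1) := by simp [hadj, hx]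
  have h1 : (0 : ℝ) < ((univ.filter (fun pq : V × V =>
      G.Adj pq.1 pq.2 ∧ ¬ allowed bank R ζ pq.1)).card : ℝ) := by
    exact_mod_cast Finset.card_pos.mpr ⟨_, hmem⟩
  have h2 : (0:ℝ) ≤ ((univ.filter (fun pq : V × V =>
      G.Adj pq.1 pq.2 ∧ allowed bank R ζ pq.1 ∧ tau pq.1 pq.2 ζ = ζ)).card : ℝ) :=
    Nat.cast_nonneg _
  linarith

lemma mem_support {ζ μ : V → ℤ} (h : 0 < step G bank R ζ μ) :
    μ ∈ insert ζ ((univ.filter fun pq : V × V => G.Adj pq.1 pq.2).image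
      fun pq => tau pq.1 pq.2 ζ) := by
  by_cases hμ : μ = ζ
  · subst hμ; exact Finset.mem_insert_self _ _
  · unfold step at h
    rw [if_neg hμ, add_zero] at h
    have hnum : (0 : ℝ) < ((univ.filter fun pq : V × V =>
        G.Adj pq.1 pq.2 ∧ allowed bank R ζ pq.1 ∧ tau pq.1 pq.2 ζ = μ).card : ℝ) := by
      by_contra h'
      push_neg at h'
      have : ((univ.filter fun pq : V × V =>
          G.Adj pq.1 pq.2 ∧ allowed bank R ζ pq.1 ∧ tau pq.1 pq.2 ζ = μ).card : ℝ) = 0 :=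
        le_antisymm h' (Nat.cast_nonneg _)
      rw [this, zero_div] at h
      exact lt_irrefl _ h
    have hcard : 0 < (univ.filter fun pq : V × V =>
        G.Adj pq.1 pq.2 ∧ allowed bank R ζ pq.1 ∧ tau pq.1 pq.2 ζ = μ).card := by
      exact_mod_cast hnum
    obtain ⟨pq, hpq⟩ := Finset.card_pos.mp hcard
    simp only [Finset.mem_filter, Finset.mem_univ, true_and] at hpq
    exact Finset.mem_insert_of_mem (Finset.mem_image.mpr
      ⟨pq, by simp [hpq.1], hpq.2.2⟩)

lemma stepT_nonneg : ∀ (t : ℕ) (ζ ζ' : V → ℤ), 0 ≤ stepT G bank R t ζ ζ'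
  | 0, ζ, ζ' => by rw [stepT]; split_ifs <;> norm_num
  | t+1, ζ, ζ' => by
      rw [stepT]
      exact Finset.sum_nonneg fun η _ =>
        mul_nonneg (step_nonneg G bank R ζ η) (stepT_nonneg t η ζ')

lemma stepT_succ_pos {t : ℕ} {ζ μ ζ' : V → ℤ} (h1 : 0 < step G bank R ζ μ)
    (h2 : 0 < stepT G bank R t μ ζ') : 0 < stepT G bank R (t+1) ζ ζ' := by
  rw [stepT]
  refine Finset.sum_pos' (fun η _ =>
      mul_nonneg (step_nonneg G bank R ζ η) (stepT_nonneg G bank R t η ζ'))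
    ⟨μ, mem_support G bank R h1, mul_pos h1 h2⟩

lemma stepT_succ_exists {t : ℕ} {ζ ζ' : V → ℤ}
    (h : 0 < stepT G bank R (t+1) ζ ζ') :
    ∃ μ, 0 < step G bank R ζ μ ∧ 0 < stepT G bank R t μ ζ' := by
  rw [stepT] at h
  by_contra hc
  push_neg at hc
  refine absurd h (not_lt.mpr (Finset.sum_nonpos fun η _ => ?_))
  rcases (step_nonneg G bank R ζ η).lt_or_eq with hs | hs
  · exact mul_nonpos_of_nonneg_of_nonpos hs.le (hc η hs)
  · rw [← hs, zero_mul]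

lemma stepT_trans : ∀ (s : ℕ) {t : ℕ} {ζ η ζ' : V → ℤ},
    0 < stepT G bank R s ζ η → 0 < stepT G bank R t η ζ' →
    0 < stepT G bank R (s + t) ζ ζ'
  | 0, t, ζ, η, ζ', h1, h2 => by
      rw [stepT] at h1
      by_cases h : ζ = η
      · subst h; simpa using h2
      · rw [if_neg h] at h1; exact absurd h1 (lt_irrefl 0)
  | s+1, t, ζ, η, ζ', h1, h2 => by
      obtain ⟨μ, hμ1, hμ2⟩ := stepT_succ_exists G bank R h1
      have h3 : 0 < stepT G bank R (s + t) μ ζ' := stepT_trans s hμ2 h2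
      have : s + 1 + t = (s + t) + 1 := by omega
      rw [this]
      exact stepT_succ_pos G bank R hμ1 h3

end AuxLemmas

theorem aperiodicity {V : Type*} [Fintype V] [DecidableEq V] {K : ℕ} (hK : 1 ≤ K)
    (G : SimpleGraph V) (hG : G.Connected) (hN : 2 ≤ Fintype.card V)
    (bank : V → Fin K) (R : Fin K → ℕ) (M : ℕ) (hM : 1 ≤ M)
    (ξ : V → ℤ) (hξ : admissible bank R M ξ) :
    ∀ d : ℕ, (∀ t : ℕ, 1 ≤ t → 0 < stepT G bank R t ξ ξ → d ∣ t) → d = 1 := by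
  intro d hd
  -- find an edge (w, y)
  obtain ⟨u, v, huv⟩ := Fintype.exists_pair_of_one_lt_card (by omega : 1 < Fintype.card V)
  obtain ⟨p⟩ := hG.preconnected u v
  have hedge : ∃ w y : V, G.Adj w y := by
    cases p with
    | nil => exact absurd rfl huv
    | cons h _ => exact ⟨_, _, h⟩
  obtain ⟨w, y, hadj⟩ := hedge
  have hwy : w ≠ y := hadj.ne
  -- the path that pumps coins out of w
  set F : ℕ → (V → ℤ) := fun k => (tau w y)^[k] ξ with hF
  have hF0 : F 0 = ξ := rfl
  have hFsucc : ∀ k, F (k+1) = tau w y (F k) := fun k =>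
    Function.iterate_succ_apply' _ _ _
  have hFw : ∀ k, F k w = ξ w - k := by
    intro k
    induction k with
    | zero => simp [hF]
    | succ k ih =>
        rw [hFsucc]
        simp only [tau, if_pos rfl, if_neg hwy, ih]
        push_cast; ring
  -- eventually the move from w is blocked
  have hex : ∃ k, ¬ allowed bank R (F k) w := by
    refine ⟨(ξ w).toNat + R (bank w) + 1, ?_⟩
    intro hal
    have hw := hFw ((ξ w).toNat + R (bank w) + 1)
    have hle : ξ w ≤ (ξ w).toNat := Int.self_le_toNat _
    have hdle := bankDebt_le bank (F ((ξ w).toNat + R (bank w) + 1)) w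
    rcases hal with h | h <;> omega
  set n := Nat.find hex with hn
  have hblock : ¬ allowed bank R (F n) w := Nat.find_spec hex
  have hmin : ∀ k, k < n → allowed bank R (F k) w := fun k hk =>
    not_not.mp (Nat.find_min hex hk)
  -- admissibility along the path
  have hadm : ∀ k, k ≤ n → admissible bank R M (F k) := by
    intro k
    induction k with
    | zero => intro _; rw [hF0]; exact hξ
    | succ k ih =>
        intro hk
        rw [hFsucc]
        exact (move_admissible bank R hwy (ih (by omega)) (hmin k (by omega))).1
  -- forward path positivity
  have hfwd : ∀ k, k ≤ n → 0 < stepT G bank R k ξ (F k) := by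
    intro k
    induction k with
    | zero => intro _; rw [hF0, stepT, if_pos rfl]; norm_num
    | succ k ih =>
        intro hk
        have h1 := ih (by omega)
        have h2 : 0 < step G bank R (F k) (F (k+1)) := by
          rw [hFsucc]
          exact step_pos_move G bank R hadj (hmin k (by omega))
        have h0 : 0 < stepT G bank R 0 (F (k+1)) (F (k+1)) := by
          rw [stepT, if_pos rfl]; norm_num
        exact stepT_trans G bank R k h1 (stepT_succ_pos G bank R h2 h0)
  -- backward path positivity
  have hbwd : ∀ k, k ≤ n → 0 < stepT G bank R k (F k) ξ := by
    intro k
    induction k with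
    | zero => intro _; rw [hF0, stepT, if_pos rfl]; norm_num
    | succ k ih =>
        intro hk
        have hy' : allowed bank R (tau w y (F k)) y :=
          (move_admissible bank R hwy (hadm k (by omega)) (hmin k (by omega))).2
        have hstep : 0 < step G bank R (F (k+1)) (F k) := by
          have ht : tau y w (F (k+1)) = F k := by
            rw [hFsucc]; exact tau_tau (F k)
          rw [← ht]
          exact step_pos_move G bank R hadj.symm (by rw [hFsucc]; exact hy')
        exact stepT_succ_pos G bank R hstep (ih (by omega))
  -- lazy step at the blocked configuration
  have hlazy : 0 < step G bank R (F n) (F n) :=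
    step_pos_lazy G bank R hadj hblock
  have h0n : 0 < stepT G bank R 0 (F n) (F n) := by
    rw [stepT, if_pos rfl]; norm_num
  have hloop1 : 0 < stepT G bank R 1 (F n) (F n) :=
    stepT_succ_pos G bank R hlazy h0n
  have hloop2 : 0 < stepT G bank R 2 (F n) (F n) :=
    stepT_succ_pos G bank R hlazy hloop1
  -- return times 2n+1 and 2n+2
  have hret1 : 0 < stepT G bank R (n + 1 + n) ξ ξ :=
    stepT_trans G bank R (n + 1)
      (stepT_trans G bank R n (hfwd n le_rfl) hloop1) (hbwd n le_rfl)
  have hret2 : 0 < stepT G bank R (n + 2 + n) ξ ξ :=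
    stepT_trans G bank R (n + 2)
      (stepT_trans G bank R n (hfwd n le_rfl) hloop2) (hbwd n le_rfl)
  have hd1 := hd (n + 1 + n) (by omega) hret1
  have hd2 := hd (n + 2 + n) (by omega) hret2
  have hsub : d ∣ (n + 2 + n) - (n + 1 + n) := Nat.dvd_sub hd2 hd1
  have h1 : (n + 2 + n) - (n + 1 + n) = 1 := by omega
  rw [h1] at hsub
  exact Nat.dvd_one.mp hsub
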